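/- Let H be a Hopf algebra, and let R and T be right H-comodule algebras. For any R-T-bimodule M, the object M ⊗ H (with structure r(m⊗h)t = Σ r_0 m t_0 ⊗ r_1 h t_1 and coaction m⊗h ↦ Σ m ⊗ h_1 ⊗ h_2) is a relative Hopf bimodule, and the functor M ↦ M ⊗ H is right adjoint to the forgetful functor from relative Hopf bimodules in _R M^H_T to R-T-bimodules, with adjunction isomorphism Hom_{R,T}(X, M) ≅ Hom_{_R M^H_T}(X, M ⊗ H) given by f ↦ (x ↦ Σ f(x_0) ⊗ x_1). -/
import Mathlib


/-!
STATEMENT 14: Let H be a Hopf algebra, R and T right H-comodule algebras.  For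
any R-T-bimodule M, the object M ⊗ H (with structure
r(m⊗h)t = Σ r₀ m t₀ ⊗ r₁ h t₁ and coaction m⊗h ↦ Σ m ⊗ h₁ ⊗ h₂) is a relative
Hopf bimodule, and M ↦ M ⊗ H is right adjoint to the forgetful functor from
relative Hopf bimodules to R-T-bimodules, with adjunction isomorphism
Hom_{R,T}(X, M) ≅ Hom_{_R M^H_T}(X, M ⊗ H), f ↦ (x ↦ Σ f(x₀) ⊗ x₁).

Bimodule structures are given by pairs of commuting representations
R →ₐ End_k M, Tᵐᵒᵖ →ₐ End_k M.
-/

open TensorProduct CategoryTheory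

/-- The left "Hopf" multiplication of `R ⊗ H` on `M ⊗ H`:
`(r ⊗ h')·(m ⊗ h) = (r·m) ⊗ (h'h)`, for a left action of `R` on `M` given by a
representation `actL : R →ₐ End_k M`. -/
noncomputable def hopfMulL (k H R M : Type) [Field k] [Ring H] [HopfAlgebra k H]
    [Ring R] [Algebra k R] [AddCommGroup M] [Module k M]
    (actL : R →ₐ[k] Module.End k M) (u : R ⊗[k] H) (z : M ⊗[k] H) : M ⊗[k] H :=
  (TensorProduct.map (TensorProduct.lift actL.toLinearMap) (LinearMap.mul' k H))
    ((TensorProduct.tensorTensorTensorComm k R H M H) (u ⊗ₜ[k] z))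

/-- The right "Hopf" multiplication of `T ⊗ H` on `M ⊗ H`:
`(m ⊗ h)·(t ⊗ h') = (m·t) ⊗ (hh')`, for a right action of `T` on `M` given by a
representation `actR : Tᵐᵒᵖ →ₐ End_k M`. -/
noncomputable def hopfMulR (k H T M : Type) [Field k] [Ring H] [HopfAlgebra k H]
    [Ring T] [Algebra k T] [AddCommGroup M] [Module k M]
    (actR : Tᵐᵒᵖ →ₐ[k] Module.End k M) (z : M ⊗[k] H) (u : T ⊗[k] H) : M ⊗[k] H :=
  (TensorProduct.map
      (TensorProduct.lift
        ((actR.toLinearMap ∘ₗ (MulOpposite.opLinearEquiv k : T ≃ₗ[k] Tᵐᵒᵖ).toLinearMap).flip))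
      (LinearMap.mul' k H))
    ((TensorProduct.tensorTensorTensorComm k M H T H) (z ⊗ₜ[k] u))

/-- A relative Hopf bimodule in `_R M^H_T`, for right `H`-comodule algebras
`(R, ρR)` and `(T, ρT)`. -/
structure HopfBimod (k H R T : Type) [Field k] [Ring H] [HopfAlgebra k H]
    [Ring R] [Algebra k R] [Ring T] [Algebra k T]
    (ρR : R →ₐ[k] R ⊗[k] H) (ρT : T →ₐ[k] T ⊗[k] H) where
  carrier : Type
  [acg : AddCommGroup carrier]
  [modk : Module k carrier]
  actL : R →ₐ[k] Module.End k carrier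
  actR : Tᵐᵒᵖ →ₐ[k] Module.End k carrier
  act_comm : ∀ (r : R) (t : Tᵐᵒᵖ) (x : carrier), actL r (actR t x) = actR t (actL r x)
  coact : carrier →ₗ[k] carrier ⊗[k] H
  coassoc : (TensorProduct.assoc k carrier H H).toLinearMap ∘ₗ
      (LinearMap.rTensor H coact) ∘ₗ coact =
    (LinearMap.lTensor carrier (Coalgebra.comul (R := k) (A := H))) ∘ₗ coact
  counit_law : (TensorProduct.rid k carrier).toLinearMap ∘ₗ
      (LinearMap.lTensor carrier (Coalgebra.counit (R := k) (A := H))) ∘ₗ coact =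
    LinearMap.id
  compatL : ∀ (r : R) (x : carrier),
    coact (actL r x) = hopfMulL k H R carrier actL (ρR r) (coact x)
  compatR : ∀ (t : T) (x : carrier),
    coact (actR (MulOpposite.op t) x) = hopfMulR k H T carrier actR (coact x) (ρT t)

attribute [instance] HopfBimod.acg HopfBimod.modk

variable {k H R T : Type} [Field k] [Ring H] [HopfAlgebra k H]
    [Ring R] [Algebra k R] [Ring T] [Algebra k T]
    {ρR : R →ₐ[k] R ⊗[k] H} {ρT : T →ₐ[k] T ⊗[k] H}

/-- A morphism of relative Hopf bimodules. -/
@[ext]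
structure HBHom (X Y : HopfBimod k H R T ρR ρT) where
  toLinearMap : X.carrier →ₗ[k] Y.carrier
  mapL : ∀ (r : R) (x : X.carrier), toLinearMap (X.actL r x) = Y.actL r (toLinearMap x)
  mapR : ∀ (t : Tᵐᵒᵖ) (x : X.carrier), toLinearMap (X.actR t x) = Y.actR t (toLinearMap x)
  colinear : Y.coact ∘ₗ toLinearMap = (LinearMap.rTensor H toLinearMap) ∘ₗ X.coact

instance : Category (HopfBimod k H R T ρR ρT) where
  Hom X Y := HBHom X Y
  id X := ⟨LinearMap.id, fun r x => rfl, fun t x => rfl, by simp⟩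
  comp {X Y Z} f g := ⟨g.toLinearMap ∘ₗ f.toLinearMap,
    fun r x => by simp [f.mapL, g.mapL],
    fun t x => by simp [f.mapR, g.mapR],
    by rw [← LinearMap.comp_assoc, g.colinear, LinearMap.comp_assoc, f.colinear,
      ← LinearMap.comp_assoc, ← LinearMap.rTensor_comp]⟩
  id_comp f := by apply HBHom.ext; simp
  comp_id f := by apply HBHom.ext; simp
  assoc f g h := by apply HBHom.ext; simp [LinearMap.comp_assoc]

/-- The cofree coaction on `M ⊗ H`: `m ⊗ h ↦ Σ (m ⊗ h₁) ⊗ h₂`. -/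
noncomputable def cofreeCoact (k H M : Type) [Field k] [Ring H] [HopfAlgebra k H]
    [AddCommGroup M] [Module k M] : M ⊗[k] H →ₗ[k] (M ⊗[k] H) ⊗[k] H :=
  (TensorProduct.assoc k M H H).symm.toLinearMap ∘ₗ
    LinearMap.lTensor M (Coalgebra.comul (R := k) (A := H))

set_option synthInstance.maxHeartbeats 1000000
set_option maxHeartbeats 1000000

namespace Adj14

variable {M : Type} [AddCommGroup M] [Module k M]
variable (actLM : R →ₐ[k] Module.End k M) (actRM : Tᵐᵒᵖ →ₐ[k] Module.End k M)

@[simp] lemma hopfMulL_tmul (r : R) (h : H) (m : M) (g : H) :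
    hopfMulL k H R M actLM (r ⊗ₜ h) (m ⊗ₜ g) = actLM r m ⊗ₜ[k] (h * g) := by
  simp [hopfMulL]

@[simp] lemma hopfMulR_tmul (t : T) (h : H) (m : M) (g : H) :
    hopfMulR k H T M actRM (m ⊗ₜ g) (t ⊗ₜ h)
      = actRM (MulOpposite.op t) m ⊗ₜ[k] (g * h) := by
  simp [hopfMulR]

@[simp] lemma hopfMulL_add_left (u v : R ⊗[k] H) (z : M ⊗[k] H) :
    hopfMulL k H R M actLM (u + v) z
      = hopfMulL k H R M actLM u z + hopfMulL k H R M actLM v z := by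
  simp [hopfMulL, add_tmul]

@[simp] lemma hopfMulL_add_right (u : R ⊗[k] H) (z w : M ⊗[k] H) :
    hopfMulL k H R M actLM u (z + w)
      = hopfMulL k H R M actLM u z + hopfMulL k H R M actLM u w := by
  simp [hopfMulL, tmul_add]

@[simp] lemma hopfMulL_zero_left (z : M ⊗[k] H) :
    hopfMulL k H R M actLM 0 z = 0 := by simp only [hopfMulL, zero_tmul]; simp

@[simp] lemma hopfMulL_zero_right (u : R ⊗[k] H) :
    hopfMulL k H R M actLM u 0 = 0 := by simp only [hopfMulL, tmul_zero]; simp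

@[simp] lemma hopfMulR_add_left (z w : M ⊗[k] H) (u : T ⊗[k] H) :
    hopfMulR k H T M actRM (z + w) u
      = hopfMulR k H T M actRM z u + hopfMulR k H T M actRM w u := by
  simp [hopfMulR, add_tmul]

@[simp] lemma hopfMulR_add_right (z : M ⊗[k] H) (u v : T ⊗[k] H) :
    hopfMulR k H T M actRM z (u + v)
      = hopfMulR k H T M actRM z u + hopfMulR k H T M actRM z v := by
  simp [hopfMulR, tmul_add]

@[simp] lemma hopfMulR_zero_left (u : T ⊗[k] H) :
    hopfMulR k H T M actRM 0 u = 0 := by simp only [hopfMulR, zero_tmul]; simp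

@[simp] lemma hopfMulR_zero_right (z : M ⊗[k] H) :
    hopfMulR k H T M actRM z 0 = 0 := by simp only [hopfMulR, tmul_zero]; simp


/-- `f ↦ f ⊗ id` as an algebra hom. -/
noncomputable def rTensorEnd : Module.End k M →ₐ[k] Module.End k (M ⊗[k] H) where
  toFun f := f.rTensor H
  map_one' := LinearMap.rTensor_id H M
  map_mul' f g := LinearMap.rTensor_comp H f g
  map_zero' := LinearMap.rTensor_zero H
  map_add' f g := LinearMap.rTensor_add H f g
  commutes' r := by ext m h; simp [Module.algebraMap_end_apply, smul_tmul']

/-- `f ↦ id ⊗ f` as an algebra hom. -/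
noncomputable def lTensorEnd : Module.End k H →ₐ[k] Module.End k (M ⊗[k] H) where
  toFun f := f.lTensor M
  map_one' := LinearMap.lTensor_id M H
  map_mul' f g := LinearMap.lTensor_comp M f g
  map_zero' := LinearMap.lTensor_zero M
  map_add' f g := LinearMap.lTensor_add M f g
  commutes' r := by ext m h; simp [Module.algebraMap_end_apply, tmul_smul]

/-- Right multiplication as an algebra hom `Hᵐᵒᵖ →ₐ End H`. -/
noncomputable def rmulEnd : Hᵐᵒᵖ →ₐ[k] Module.End k H where
  toFun h := LinearMap.mulRight k h.unop
  map_one' := LinearMap.mulRight_one k H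
  map_mul' a b := by
    simp [MulOpposite.unop_mul, LinearMap.mulRight_mul, Module.End.mul_eq_comp]
  map_zero' := by ext x; simp
  map_add' a b := by ext x; simp [mul_add]
  commutes' r := by
    ext x; simp [Module.algebraMap_end_apply, Algebra.algebraMap_eq_smul_one, mul_smul_comm]

/-- The action of `R ⊗ H` on `M ⊗ H`. -/
noncomputable def muL : R ⊗[k] H →ₐ[k] Module.End k (M ⊗[k] H) :=
  Algebra.TensorProduct.lift ((rTensorEnd (k := k) (H := H) (M := M)).comp actLM)
    ((lTensorEnd (k := k) (H := H) (M := M)).comp (Algebra.lmul k H))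
    (fun f g => by
      apply LinearMap.ext; intro z
      show ((_ : Module.End k M).rTensor H ∘ₗ LinearMap.lTensor M _) z
        = ((_ : Module.End k H).lTensor M ∘ₗ LinearMap.rTensor H _) z
      rw [LinearMap.rTensor_comp_lTensor, LinearMap.lTensor_comp_rTensor])

/-- The action of `Tᵐᵒᵖ ⊗ Hᵐᵒᵖ` on `M ⊗ H`. -/
noncomputable def muR : Tᵐᵒᵖ ⊗[k] Hᵐᵒᵖ →ₐ[k] Module.End k (M ⊗[k] H) :=
  Algebra.TensorProduct.lift ((rTensorEnd (k := k) (H := H) (M := M)).comp actRM)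
    ((lTensorEnd (k := k) (H := H) (M := M)).comp (rmulEnd (k := k) (H := H)))
    (fun f g => by
      apply LinearMap.ext; intro z
      show ((_ : Module.End k M).rTensor H ∘ₗ LinearMap.lTensor M _) z
        = ((_ : Module.End k H).lTensor M ∘ₗ LinearMap.rTensor H _) z
      rw [LinearMap.rTensor_comp_lTensor, LinearMap.lTensor_comp_rTensor])

@[simp] lemma muL_tmul (r : R) (h : H) (m : M) (g : H) :
    muL actLM (r ⊗ₜ h) (m ⊗ₜ g) = actLM r m ⊗ₜ[k] (h * g) := by
  simp [muL, rTensorEnd, lTensorEnd, Algebra.TensorProduct.lift_tmul, Module.End.mul_apply]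

@[simp] lemma muR_tmul (t : Tᵐᵒᵖ) (h : Hᵐᵒᵖ) (m : M) (g : H) :
    muR actRM (t ⊗ₜ h) (m ⊗ₜ g) = actRM t m ⊗ₜ[k] (g * h.unop) := by
  simp [muR, rTensorEnd, lTensorEnd, rmulEnd, Algebra.TensorProduct.lift_tmul,
    Module.End.mul_apply]

lemma muL_eq_hopfMulL (u : R ⊗[k] H) (z : M ⊗[k] H) :
    muL actLM u z = hopfMulL k H R M actLM u z := by
  induction u using TensorProduct.induction_on with
  | zero => simp
  | tmul r h =>
    induction z using TensorProduct.induction_on with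
    | zero => simp
    | tmul m g => simp
    | add z w hz hw => simp [map_add, hz, hw]
  | add u v hu hv => simp [map_add, hu, hv, LinearMap.add_apply]

/-- The opposite-transport map `T ⊗ H →ₗ Tᵐᵒᵖ ⊗ Hᵐᵒᵖ`. -/
noncomputable def opT : T ⊗[k] H →ₗ[k] Tᵐᵒᵖ ⊗[k] Hᵐᵒᵖ :=
  ((Algebra.TensorProduct.opAlgEquiv k k T H).symm.toLinearMap) ∘ₗ
    (MulOpposite.opLinearEquiv k (M := T ⊗[k] H)).toLinearMap

@[simp] lemma opT_tmul (t : T) (h : H) :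
    opT (k := k) (t ⊗ₜ h) = MulOpposite.op t ⊗ₜ MulOpposite.op h := by
  simp only [opT, LinearMap.coe_comp, LinearEquiv.coe_coe, Function.comp_apply,
    MulOpposite.coe_opLinearEquiv, AlgEquiv.toLinearMap_apply]
  exact Algebra.TensorProduct.opAlgEquiv_symm_tmul k k T H t h

lemma muR_eq_hopfMulR (u : T ⊗[k] H) (z : M ⊗[k] H) :
    muR actRM (opT u) z = hopfMulR k H T M actRM z u := by
  induction u using TensorProduct.induction_on with
  | zero => simp
  | tmul t h =>
    induction z using TensorProduct.induction_on with
    | zero => simp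
    | tmul m g => simp
    | add z w hz hw => rw [map_add, hz, hw, hopfMulR_add_left]
  | add u v hu hv => simp [map_add, hu, hv, LinearMap.add_apply]


variable {N : Type} [AddCommGroup N] [Module k N]

lemma hopfMul_comm
    (hMcomm : ∀ (r : R) (t : Tᵐᵒᵖ) (x : M), actLM r (actRM t x) = actRM t (actLM r x))
    (u : R ⊗[k] H) (v : T ⊗[k] H) (z : M ⊗[k] H) :
    hopfMulL k H R M actLM u (hopfMulR k H T M actRM z v)
      = hopfMulR k H T M actRM (hopfMulL k H R M actLM u z) v := by
  induction u using TensorProduct.induction_on with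
  | zero => simp
  | tmul r h =>
    induction v using TensorProduct.induction_on with
    | zero => simp
    | tmul t h' =>
      induction z using TensorProduct.induction_on with
      | zero => simp
      | tmul m g => simp [hMcomm, mul_assoc]
      | add z w hz hw => simp [hz, hw]
    | add v v' hv hv' => simp [hv, hv']
  | add u u' hu hu' => simp [hu, hu']

lemma rTensor_hopfMulL (aLN : R →ₐ[k] Module.End k N) (f : N →ₗ[k] M)
    (hf : ∀ (r : R) (x : N), f (aLN r x) = actLM r (f x))
    (u : R ⊗[k] H) (w : N ⊗[k] H) :
    LinearMap.rTensor H f (hopfMulL k H R N aLN u w)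
      = hopfMulL k H R M actLM u (LinearMap.rTensor H f w) := by
  induction u using TensorProduct.induction_on with
  | zero => simp
  | tmul r h =>
    induction w using TensorProduct.induction_on with
    | zero => simp
    | tmul n g => simp [hf]
    | add w w' h1 h2 => simp [h1, h2]
  | add u u' h1 h2 => simp [h1, h2]

lemma rTensor_hopfMulR (aRN : Tᵐᵒᵖ →ₐ[k] Module.End k N) (f : N →ₗ[k] M)
    (hf : ∀ (t : Tᵐᵒᵖ) (x : N), f (aRN t x) = actRM t (f x))
    (u : T ⊗[k] H) (w : N ⊗[k] H) :
    LinearMap.rTensor H f (hopfMulR k H T N aRN w u)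
      = hopfMulR k H T M actRM (LinearMap.rTensor H f w) u := by
  induction u using TensorProduct.induction_on with
  | zero => simp
  | tmul t h =>
    induction w using TensorProduct.induction_on with
    | zero => simp
    | tmul n g => simp [hf]
    | add w w' h1 h2 => simp [h1, h2]
  | add u u' h1 h2 => simp [h1, h2]

/-- Applying `ε` to the `H`-component intertwines the `R ⊗ H`-action with the `R`-action. -/
lemma counit_hopfMulL (u : R ⊗[k] H) (z : M ⊗[k] H) :
    (TensorProduct.rid k M) (LinearMap.lTensor M (Coalgebra.counit (R := k) (A := H))
        (hopfMulL k H R M actLM u z))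
      = actLM ((TensorProduct.rid k R) (LinearMap.lTensor R (Coalgebra.counit (R := k)) u))
          ((TensorProduct.rid k M) (LinearMap.lTensor M (Coalgebra.counit (R := k)) z)) := by
  induction u using TensorProduct.induction_on with
  | zero => simp
  | tmul r h =>
    induction z using TensorProduct.induction_on with
    | zero => simp
    | tmul m g =>
      simp only [hopfMulL_tmul, LinearMap.lTensor_tmul, TensorProduct.rid_tmul,
        Bialgebra.counit_mul, map_smul, LinearMap.smul_apply, mul_smul]
      rw [smul_comm]
    | add z w h1 h2 => simp [h1, h2]
  | add u v h1 h2 => simp [h1, h2, map_add]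

lemma counit_hopfMulR (u : T ⊗[k] H) (z : M ⊗[k] H) :
    (TensorProduct.rid k M) (LinearMap.lTensor M (Coalgebra.counit (R := k) (A := H))
        (hopfMulR k H T M actRM z u))
      = actRM (MulOpposite.op
            ((TensorProduct.rid k T) (LinearMap.lTensor T (Coalgebra.counit (R := k)) u)))
          ((TensorProduct.rid k M) (LinearMap.lTensor M (Coalgebra.counit (R := k)) z)) := by
  induction u using TensorProduct.induction_on with
  | zero => simp
  | tmul t h =>
    induction z using TensorProduct.induction_on with
    | zero => simp
    | tmul m g =>
      simp only [hopfMulR_tmul, LinearMap.lTensor_tmul, TensorProduct.rid_tmul,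
        Bialgebra.counit_mul, MulOpposite.op_smul, map_smul, LinearMap.smul_apply, mul_smul]
    | add z w h1 h2 => simp [h1, h2]
  | add u v h1 h2 => simp [h1, h2, map_add, MulOpposite.op_add]


lemma assoc_symm_tmul_eq (m : M) (c : H ⊗[k] H) :
    (TensorProduct.assoc k M H H).symm (m ⊗ₜ c)
      = LinearMap.rTensor H (TensorProduct.mk k M H m) c := by
  induction c using TensorProduct.induction_on with
  | zero => simp
  | tmul a b => rfl
  | add c d h1 h2 => simp [tmul_add, h1, h2]

lemma cofree_tmul (m : M) (h : H) :
    cofreeCoact k H M (m ⊗ₜ h)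
      = LinearMap.rTensor H (TensorProduct.mk k M H m) (Coalgebra.comul h) := by
  simp only [cofreeCoact, LinearMap.coe_comp, Function.comp_apply, LinearMap.lTensor_tmul,
    LinearEquiv.coe_coe]
  exact assoc_symm_tmul_eq m _

lemma cofree_comp_mk (m : M) :
    cofreeCoact k H M ∘ₗ TensorProduct.mk k M H m
      = LinearMap.rTensor H (TensorProduct.mk k M H m) ∘ₗ
          (Coalgebra.comul (R := k) (A := H)) := by
  apply LinearMap.ext; intro h
  simpa using cofree_tmul m h

lemma assoc_rTensor_rTensor_mk (m : M) (w : H ⊗[k] (H ⊗[k] H)) :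
    TensorProduct.assoc k (M ⊗[k] H) H H
        (LinearMap.rTensor H (LinearMap.rTensor H (TensorProduct.mk k M H m))
          ((TensorProduct.assoc k H H H).symm w))
      = LinearMap.rTensor (H ⊗[k] H) (TensorProduct.mk k M H m) w := by
  induction w using TensorProduct.induction_on with
  | zero => simp
  | tmul a d =>
    induction d using TensorProduct.induction_on with
    | zero => simp [tmul_zero]
    | tmul b c => rfl
    | add d d' h1 h2 => simp [tmul_add, h1, h2]
  | add w w' h1 h2 => simp [h1, h2]

/-- Coassociativity of the cofree coaction. -/
lemma cofree_coassoc :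
    (TensorProduct.assoc k (M ⊗[k] H) H H).toLinearMap ∘ₗ
        (LinearMap.rTensor H (cofreeCoact k H M)) ∘ₗ cofreeCoact k H M =
      (LinearMap.lTensor (M ⊗[k] H) (Coalgebra.comul (R := k) (A := H))) ∘ₗ
        cofreeCoact k H M := by
  apply TensorProduct.ext'
  intro m h
  simp only [LinearMap.coe_comp, Function.comp_apply, LinearEquiv.coe_coe]
  rw [cofree_tmul, ← LinearMap.comp_apply (LinearMap.rTensor H (cofreeCoact k H M)),
    ← LinearMap.rTensor_comp, cofree_comp_mk, LinearMap.rTensor_comp, LinearMap.comp_apply,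
    ← Coalgebra.coassoc_symm_apply, assoc_rTensor_rTensor_mk,
    ← LinearMap.comp_apply (LinearMap.rTensor (H ⊗[k] H) _), LinearMap.rTensor_comp_lTensor,
    ← LinearMap.lTensor_comp_rTensor, LinearMap.comp_apply]

/-- Counit law for the cofree coaction. -/
lemma cofree_counit :
    (TensorProduct.rid k (M ⊗[k] H)).toLinearMap ∘ₗ
        (LinearMap.lTensor (M ⊗[k] H) (Coalgebra.counit (R := k) (A := H))) ∘ₗ
          cofreeCoact k H M = LinearMap.id := by
  apply TensorProduct.ext'
  intro m h
  simp only [LinearMap.coe_comp, Function.comp_apply, LinearEquiv.coe_coe, LinearMap.id_coe,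
    id_eq]
  rw [cofree_tmul, ← LinearMap.comp_apply (LinearMap.lTensor (M ⊗[k] H) _),
    LinearMap.lTensor_comp_rTensor, ← LinearMap.rTensor_comp_lTensor, LinearMap.comp_apply,
    Coalgebra.lTensor_counit_comul]
  simp


variable (σR : R →ₐ[k] R ⊗[k] H) (σT : T →ₐ[k] T ⊗[k] H)

/-- The left action of `R` on `M ⊗ H` through `σR`. -/
noncomputable def actL' : R →ₐ[k] Module.End k (M ⊗[k] H) := (muL actLM).comp σR

/-- The action of `(T ⊗ H)ᵐᵒᵖ` on `M ⊗ H`. -/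
noncomputable def bigR : (T ⊗[k] H)ᵐᵒᵖ →ₐ[k] Module.End k (M ⊗[k] H) :=
  (muR actRM).comp (Algebra.TensorProduct.opAlgEquiv k k T H).symm.toAlgHom

/-- The right action of `Tᵐᵒᵖ` on `M ⊗ H` through `σT`. -/
noncomputable def actR' : Tᵐᵒᵖ →ₐ[k] Module.End k (M ⊗[k] H) :=
  (bigR actRM).comp (AlgHom.op σT)

lemma actL'_apply (r : R) (z : M ⊗[k] H) :
    actL' actLM σR r z = hopfMulL k H R M actLM (σR r) z :=
  muL_eq_hopfMulL actLM (σR r) z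

lemma bigR_op (u : T ⊗[k] H) : bigR (M := M) actRM (MulOpposite.op u) = muR actRM (opT u) :=
  rfl

lemma actR'_op (t : T) : actR' actRM σT (MulOpposite.op t) = muR (M := M) actRM (opT (σT t)) :=
  rfl

lemma actR'_apply (t : T) (z : M ⊗[k] H) :
    actR' actRM σT (MulOpposite.op t) z = hopfMulR k H T M actRM z (σT t) := by
  rw [actR'_op]; exact muR_eq_hopfMulR actRM (σT t) z

lemma actL'_actR'_comm
    (hMcomm : ∀ (r : R) (t : Tᵐᵒᵖ) (x : M), actLM r (actRM t x) = actRM t (actLM r x))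
    (r : R) (t : Tᵐᵒᵖ) (z : M ⊗[k] H) :
    actL' actLM σR r (actR' actRM σT t z) = actR' actRM σT t (actL' actLM σR r z) := by
  rw [← MulOpposite.op_unop t]
  rw [actL'_apply, actR'_apply, actR'_apply, actL'_apply]
  exact hopfMul_comm actLM actRM hMcomm _ _ z

lemma hopfMulL_big_mul (r : R) (m : M) (c d : H ⊗[k] H) :
    (TensorProduct.assoc k M H H).symm (actLM r m ⊗ₜ (c * d))
      = hopfMulL k H (R ⊗[k] H) (M ⊗[k] H) (muL actLM)
          ((TensorProduct.assoc k R H H).symm (r ⊗ₜ c))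
          ((TensorProduct.assoc k M H H).symm (m ⊗ₜ d)) := by
  induction c using TensorProduct.induction_on with
  | zero => simp [tmul_zero]
  | tmul a b =>
    induction d using TensorProduct.induction_on with
    | zero => simp [tmul_zero]
    | tmul e f => simp [Algebra.TensorProduct.tmul_mul_tmul, assoc_symm_tmul]
    | add d d' h1 h2 => simp [mul_add, tmul_add, h1, h2]
  | add c c' h1 h2 => simp [add_mul, tmul_add, h1, h2]

lemma cofree_muL (u : R ⊗[k] H) (z : M ⊗[k] H) :
    cofreeCoact k H M (muL actLM u z)
      = hopfMulL k H (R ⊗[k] H) (M ⊗[k] H) (muL actLM)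
          ((TensorProduct.assoc k R H H).symm
            (LinearMap.lTensor R (Coalgebra.comul (R := k) (A := H)) u))
          (cofreeCoact k H M z) := by
  induction u using TensorProduct.induction_on with
  | zero => simp
  | tmul r h =>
    induction z using TensorProduct.induction_on with
    | zero => simp
    | tmul m g =>
      simp only [muL_tmul, LinearMap.lTensor_tmul]
      show (TensorProduct.assoc k M H H).symm.toLinearMap
          (LinearMap.lTensor M Coalgebra.comul (actLM r m ⊗ₜ (h * g))) = _
      simp only [LinearMap.lTensor_tmul, LinearEquiv.coe_coe, Bialgebra.comul_mul]
      rw [hopfMulL_big_mul]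
      congr 1
    | add z w h1 h2 => simp [map_add, h1, h2]
  | add u v h1 h2 => simp [map_add, h1, h2, LinearMap.add_apply]

lemma hopfMulL_actL'_eq (u : R ⊗[k] H) (z' : (M ⊗[k] H) ⊗[k] H) :
    hopfMulL k H R (M ⊗[k] H) (actL' actLM σR) u z'
      = hopfMulL k H (R ⊗[k] H) (M ⊗[k] H) (muL actLM)
          (LinearMap.rTensor H σR.toLinearMap u) z' := by
  induction u using TensorProduct.induction_on with
  | zero => simp
  | tmul r h =>
    induction z' using TensorProduct.induction_on with
    | zero => simp
    | tmul z d => simp [actL']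
    | add z w h1 h2 => simp [h1, h2]
  | add u v h1 h2 => simp [map_add, h1, h2]

lemma cofree_compatL
    (hρR1 : (TensorProduct.assoc k R H H).toLinearMap ∘ₗ
        (LinearMap.rTensor H σR.toLinearMap) ∘ₗ σR.toLinearMap =
      (LinearMap.lTensor R (Coalgebra.comul (R := k) (A := H))) ∘ₗ σR.toLinearMap)
    (r : R) (z : M ⊗[k] H) :
    cofreeCoact k H M (actL' actLM σR r z)
      = hopfMulL k H R (M ⊗[k] H) (actL' actLM σR) (σR r) (cofreeCoact k H M z) := by
  have h1 : actL' actLM σR r z = muL actLM (σR r) z := rfl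
  have h2 := LinearMap.congr_fun hρR1 r
  simp only [LinearMap.coe_comp, Function.comp_apply, AlgHom.toLinearMap_apply,
    LinearEquiv.coe_coe] at h2
  rw [h1, cofree_muL, hopfMulL_actL'_eq, ← h2]
  simp

lemma hopfMulR_big_mul (t : T) (m : M) (c d : H ⊗[k] H) :
    (TensorProduct.assoc k M H H).symm (actRM (MulOpposite.op t) m ⊗ₜ (c * d))
      = hopfMulR k H (T ⊗[k] H) (M ⊗[k] H) (bigR actRM)
          ((TensorProduct.assoc k M H H).symm (m ⊗ₜ c))
          ((TensorProduct.assoc k T H H).symm (t ⊗ₜ d)) := by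
  induction c using TensorProduct.induction_on with
  | zero => simp [tmul_zero]
  | tmul a b =>
    induction d using TensorProduct.induction_on with
    | zero => simp [tmul_zero]
    | tmul e f =>
      simp [Algebra.TensorProduct.tmul_mul_tmul, assoc_symm_tmul, bigR_op]
    | add d d' h1 h2 => simp [mul_add, tmul_add, h1, h2]
  | add c c' h1 h2 => simp [add_mul, tmul_add, h1, h2]

lemma cofree_muR (u : T ⊗[k] H) (z : M ⊗[k] H) :
    cofreeCoact k H M (muR actRM (opT u) z)
      = hopfMulR k H (T ⊗[k] H) (M ⊗[k] H) (bigR actRM)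
          (cofreeCoact k H M z)
          ((TensorProduct.assoc k T H H).symm
            (LinearMap.lTensor T (Coalgebra.comul (R := k) (A := H)) u)) := by
  induction u using TensorProduct.induction_on with
  | zero => simp
  | tmul t h =>
    induction z using TensorProduct.induction_on with
    | zero => simp
    | tmul m g =>
      simp only [opT_tmul, muR_tmul, MulOpposite.unop_op, LinearMap.lTensor_tmul]
      show (TensorProduct.assoc k M H H).symm.toLinearMap
          (LinearMap.lTensor M Coalgebra.comul (actRM (MulOpposite.op t) m ⊗ₜ (g * h))) = _
      simp only [LinearMap.lTensor_tmul, LinearEquiv.coe_coe, Bialgebra.comul_mul]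
      rw [hopfMulR_big_mul]
      congr 1
    | add z w h1 h2 =>
      simp only [opT_tmul] at h1 h2
      simp [map_add, h1, h2]
  | add u v h1 h2 => simp [map_add, h1, h2, LinearMap.add_apply]

lemma hopfMulR_actR'_eq (u : T ⊗[k] H) (z' : (M ⊗[k] H) ⊗[k] H) :
    hopfMulR k H T (M ⊗[k] H) (actR' actRM σT) z' u
      = hopfMulR k H (T ⊗[k] H) (M ⊗[k] H) (bigR actRM) z'
          (LinearMap.rTensor H σT.toLinearMap u) := by
  induction u using TensorProduct.induction_on with
  | zero => simp
  | tmul t h =>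
    induction z' using TensorProduct.induction_on with
    | zero => simp
    | tmul z d =>
      simp only [LinearMap.rTensor_tmul, AlgHom.toLinearMap_apply, hopfMulR_tmul]
      rw [actR'_op, bigR_op]
    | add z w h1 h2 => simp [h1, h2]
  | add u v h1 h2 => simp [map_add, h1, h2]

lemma cofree_compatR
    (hρT1 : (TensorProduct.assoc k T H H).toLinearMap ∘ₗ
        (LinearMap.rTensor H σT.toLinearMap) ∘ₗ σT.toLinearMap =
      (LinearMap.lTensor T (Coalgebra.comul (R := k) (A := H))) ∘ₗ σT.toLinearMap)
    (t : T) (z : M ⊗[k] H) :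
    cofreeCoact k H M (actR' actRM σT (MulOpposite.op t) z)
      = hopfMulR k H T (M ⊗[k] H) (actR' actRM σT) (cofreeCoact k H M z) (σT t) := by
  have h2 := LinearMap.congr_fun hρT1 t
  simp only [LinearMap.coe_comp, Function.comp_apply, AlgHom.toLinearMap_apply,
    LinearEquiv.coe_coe] at h2
  rw [actR'_op, cofree_muR, hopfMulR_actR'_eq, ← h2]
  simp


/-- Naturality of the cofree coaction. -/
lemma cofree_natural (f : N →ₗ[k] M) :
    cofreeCoact k H M ∘ₗ LinearMap.rTensor H f
      = LinearMap.rTensor H (LinearMap.rTensor H f) ∘ₗ cofreeCoact k H N := by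
  apply TensorProduct.ext'
  intro n h
  simp only [LinearMap.coe_comp, Function.comp_apply, LinearMap.rTensor_tmul]
  rw [cofree_tmul, cofree_tmul,
    ← LinearMap.comp_apply (LinearMap.rTensor H (LinearMap.rTensor H f)),
    ← LinearMap.rTensor_comp]
  congr 2

/-- A coassociative coaction is intertwined with the cofree coaction. -/
lemma cofree_comp_coact (co : N →ₗ[k] N ⊗[k] H)
    (hco : (TensorProduct.assoc k N H H).toLinearMap ∘ₗ
        (LinearMap.rTensor H co) ∘ₗ co =
      (LinearMap.lTensor N (Coalgebra.comul (R := k) (A := H))) ∘ₗ co) :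
    cofreeCoact k H N ∘ₗ co = LinearMap.rTensor H co ∘ₗ co := by
  apply LinearMap.ext; intro x
  have := LinearMap.congr_fun hco x
  simp only [LinearMap.coe_comp, Function.comp_apply, LinearEquiv.coe_coe] at this ⊢
  simp only [cofreeCoact, LinearMap.coe_comp, Function.comp_apply, LinearEquiv.coe_coe]
  rw [← this, LinearEquiv.symm_apply_apply]

/-- Naturality of `rid ∘ lTensor ε`. -/
lemma ridEps_natural (f : N →ₗ[k] M) :
    (TensorProduct.rid k M).toLinearMap ∘ₗ
        LinearMap.lTensor M (Coalgebra.counit (R := k) (A := H)) ∘ₗ LinearMap.rTensor H f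
      = f ∘ₗ (TensorProduct.rid k N).toLinearMap ∘ₗ
          LinearMap.lTensor N (Coalgebra.counit (R := k) (A := H)) := by
  apply TensorProduct.ext'
  intro n h
  simp

/-- `rid ∘ lTensor ε` splits the cofree coaction. -/
lemma rTensor_ridEps_cofree :
    LinearMap.rTensor H ((TensorProduct.rid k M).toLinearMap ∘ₗ
        LinearMap.lTensor M (Coalgebra.counit (R := k) (A := H))) ∘ₗ cofreeCoact k H M
      = LinearMap.id := by
  apply TensorProduct.ext'
  intro m h
  simp only [LinearMap.coe_comp, Function.comp_apply, LinearMap.id_coe, id_eq]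
  rw [cofree_tmul, ← LinearMap.comp_apply, ← LinearMap.rTensor_comp]
  have : ((TensorProduct.rid k M).toLinearMap ∘ₗ
      LinearMap.lTensor M (Coalgebra.counit (R := k) (A := H))) ∘ₗ TensorProduct.mk k M H m
      = LinearMap.toSpanSingleton k M m ∘ₗ (Coalgebra.counit (R := k) (A := H)) := by
    apply LinearMap.ext; intro h'
    simp
  rw [this, LinearMap.rTensor_comp, LinearMap.comp_apply, Coalgebra.rTensor_counit_comul]
  simp

end Adj14

theorem cofree_hopf_bimodule_adjunction
    (k H R T : Type) [Field k] [Ring H] [HopfAlgebra k H]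
    [Ring R] [Algebra k R] [Ring T] [Algebra k T]
    (ρR : R →ₐ[k] R ⊗[k] H) (ρT : T →ₐ[k] T ⊗[k] H)
    (hρR1 : (TensorProduct.assoc k R H H).toLinearMap ∘ₗ
        (LinearMap.rTensor H ρR.toLinearMap) ∘ₗ ρR.toLinearMap =
      (LinearMap.lTensor R (Coalgebra.comul (R := k) (A := H))) ∘ₗ ρR.toLinearMap)
    (hρR2 : (TensorProduct.rid k R).toLinearMap ∘ₗ
        (LinearMap.lTensor R (Coalgebra.counit (R := k) (A := H))) ∘ₗ ρR.toLinearMap =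
      LinearMap.id)
    (hρT1 : (TensorProduct.assoc k T H H).toLinearMap ∘ₗ
        (LinearMap.rTensor H ρT.toLinearMap) ∘ₗ ρT.toLinearMap =
      (LinearMap.lTensor T (Coalgebra.comul (R := k) (A := H))) ∘ₗ ρT.toLinearMap)
    (hρT2 : (TensorProduct.rid k T).toLinearMap ∘ₗ
        (LinearMap.lTensor T (Coalgebra.counit (R := k) (A := H))) ∘ₗ ρT.toLinearMap =
      LinearMap.id)
    (M : Type) [AddCommGroup M] [Module k M]
    (actLM : R →ₐ[k] Module.End k M) (actRM : Tᵐᵒᵖ →ₐ[k] Module.End k M)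
    (hMcomm : ∀ (r : R) (t : Tᵐᵒᵖ) (x : M), actLM r (actRM t x) = actRM t (actLM r x))
    (X : HopfBimod k H R T ρR ρT) :
    ∃ (actL' : R →ₐ[k] Module.End k (M ⊗[k] H))
      (actR' : Tᵐᵒᵖ →ₐ[k] Module.End k (M ⊗[k] H))
      (hcomm' : ∀ (r : R) (t : Tᵐᵒᵖ) (z : M ⊗[k] H),
        actL' r (actR' t z) = actR' t (actL' r z))
      (h1 : (TensorProduct.assoc k (M ⊗[k] H) H H).toLinearMap ∘ₗ
          (LinearMap.rTensor H (cofreeCoact k H M)) ∘ₗ cofreeCoact k H M =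
        (LinearMap.lTensor (M ⊗[k] H) (Coalgebra.comul (R := k) (A := H))) ∘ₗ
          cofreeCoact k H M)
      (h2 : (TensorProduct.rid k (M ⊗[k] H)).toLinearMap ∘ₗ
          (LinearMap.lTensor (M ⊗[k] H) (Coalgebra.counit (R := k) (A := H))) ∘ₗ
            cofreeCoact k H M =
        LinearMap.id)
      (hL : ∀ (r : R) (z : M ⊗[k] H),
        cofreeCoact k H M (actL' r z) =
          hopfMulL k H R (M ⊗[k] H) actL' (ρR r) (cofreeCoact k H M z))
      (hR : ∀ (t : T) (z : M ⊗[k] H),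
        cofreeCoact k H M (actR' (MulOpposite.op t) z) =
          hopfMulR k H T (M ⊗[k] H) actR' (cofreeCoact k H M z) (ρT t)),
      -- the actions of R and T on M ⊗ H are the prescribed ones:
      (∀ (r : R) (z : M ⊗[k] H), actL' r z = hopfMulL k H R M actLM (ρR r) z) ∧
      (∀ (t : T) (z : M ⊗[k] H),
        actR' (MulOpposite.op t) z = hopfMulR k H T M actRM z (ρT t)) ∧
      -- the adjunction bijection f ↦ ((rTensor H f) ∘ coact_X):
      (let MH : HopfBimod k H R T ρR ρT :=
        ⟨M ⊗[k] H, actL', actR', hcomm', cofreeCoact k H M, h1, h2, hL, hR⟩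
       (∀ f : X.carrier →ₗ[k] M,
          (∀ (r : R) (x : X.carrier), f (X.actL r x) = actLM r (f x)) →
          (∀ (t : Tᵐᵒᵖ) (x : X.carrier), f (X.actR t x) = actRM t (f x)) →
          ∃ g : X ⟶ MH, g.toLinearMap = (LinearMap.rTensor H f) ∘ₗ X.coact) ∧
       (∀ g : X ⟶ MH, ∃! f : X.carrier →ₗ[k] M,
          (∀ (r : R) (x : X.carrier), f (X.actL r x) = actLM r (f x)) ∧
          (∀ (t : Tᵐᵒᵖ) (x : X.carrier), f (X.actR t x) = actRM t (f x)) ∧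
          g.toLinearMap = (LinearMap.rTensor H f) ∘ₗ X.coact)) := by
  classical
  refine ⟨Adj14.actL' actLM ρR, Adj14.actR' actRM ρT,
    Adj14.actL'_actR'_comm actLM actRM ρR ρT hMcomm,
    Adj14.cofree_coassoc (M := M), Adj14.cofree_counit (M := M),
    Adj14.cofree_compatL actLM ρR hρR1,
    Adj14.cofree_compatR actRM ρT hρT1,
    fun r z => Adj14.actL'_apply actLM ρR r z,
    fun t z => Adj14.actR'_apply actRM ρT t z,
    ?_, ?_⟩
  · -- existence of g for each bimodule map f
    intro f hfL hfR
    refine ⟨⟨(LinearMap.rTensor H f) ∘ₗ X.coact, ?_, ?_, ?_⟩, rfl⟩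
    · intro r x
      show LinearMap.rTensor H f (X.coact (X.actL r x))
        = Adj14.actL' actLM ρR r (LinearMap.rTensor H f (X.coact x))
      rw [X.compatL, Adj14.rTensor_hopfMulL actLM X.actL f hfL, Adj14.actL'_apply]
    · intro t x
      rw [← MulOpposite.op_unop t]
      show LinearMap.rTensor H f (X.coact (X.actR (MulOpposite.op t.unop) x))
        = Adj14.actR' actRM ρT (MulOpposite.op t.unop) (LinearMap.rTensor H f (X.coact x))
      rw [X.compatR, Adj14.rTensor_hopfMulR actRM X.actR f hfR,
        Adj14.actR'_apply actRM ρT]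
    · show cofreeCoact k H M ∘ₗ (LinearMap.rTensor H f ∘ₗ X.coact)
        = LinearMap.rTensor H (LinearMap.rTensor H f ∘ₗ X.coact) ∘ₗ X.coact
      rw [← LinearMap.comp_assoc, Adj14.cofree_natural f, LinearMap.comp_assoc,
        Adj14.cofree_comp_coact X.coact X.coassoc, ← LinearMap.comp_assoc,
        ← LinearMap.rTensor_comp]
  · -- uniqueness: every morphism g comes from a unique bimodule map f
    intro g
    have gcol : cofreeCoact k H M ∘ₗ g.toLinearMap
        = LinearMap.rTensor H g.toLinearMap ∘ₗ X.coact := g.colinear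
    refine ⟨(TensorProduct.rid k M).toLinearMap ∘ₗ
      LinearMap.lTensor M (Coalgebra.counit (R := k) (A := H)) ∘ₗ g.toLinearMap,
      ⟨?_, ?_, ?_⟩, ?_⟩
    · intro r x
      have h1 : g.toLinearMap (X.actL r x)
          = Adj14.muL actLM (ρR r) (g.toLinearMap x) := g.mapL r x
      have h2 := LinearMap.congr_fun hρR2 r
      simp only [LinearMap.coe_comp, Function.comp_apply, LinearEquiv.coe_coe,
        AlgHom.toLinearMap_apply, LinearMap.id_coe, id_eq] at h2
      simp only [LinearMap.coe_comp, Function.comp_apply, LinearEquiv.coe_coe]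
      rw [h1, Adj14.muL_eq_hopfMulL, Adj14.counit_hopfMulL, h2]
    · intro t x
      rw [← MulOpposite.op_unop t]
      have h1 : g.toLinearMap (X.actR (MulOpposite.op t.unop) x)
          = Adj14.muR actRM (Adj14.opT (ρT t.unop)) (g.toLinearMap x) :=
        g.mapR (MulOpposite.op t.unop) x
      have h2 := LinearMap.congr_fun hρT2 t.unop
      simp only [LinearMap.coe_comp, Function.comp_apply, LinearEquiv.coe_coe,
        AlgHom.toLinearMap_apply, LinearMap.id_coe, id_eq] at h2
      simp only [LinearMap.coe_comp, Function.comp_apply, LinearEquiv.coe_coe]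
      rw [h1, Adj14.muR_eq_hopfMulR, Adj14.counit_hopfMulR, h2]
    · -- g is recovered from f
      apply LinearMap.ext; intro x
      have gc := LinearMap.congr_fun gcol x
      have hr : LinearMap.rTensor H ((TensorProduct.rid k M).toLinearMap ∘ₗ
            LinearMap.lTensor M (Coalgebra.counit (R := k) (A := H)) ∘ₗ g.toLinearMap)
          = LinearMap.rTensor H ((TensorProduct.rid k M).toLinearMap ∘ₗ
              LinearMap.lTensor M (Coalgebra.counit (R := k) (A := H))) ∘ₗ
            LinearMap.rTensor H g.toLinearMap := by
        rw [← LinearMap.rTensor_comp]; rfl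
      have hid := LinearMap.congr_fun
        (Adj14.rTensor_ridEps_cofree (k := k) (H := H) (M := M)) (g.toLinearMap x)
      simp only [LinearMap.coe_comp, Function.comp_apply, LinearMap.id_coe, id_eq] at gc hid ⊢
      rw [hr]
      simp only [LinearMap.coe_comp, Function.comp_apply]
      rw [← gc, hid]
    · -- uniqueness
      rintro f' ⟨-, -, hE'⟩
      rw [hE']
      apply LinearMap.ext; intro x
      have hn := LinearMap.congr_fun (Adj14.ridEps_natural f') (X.coact x)
      have hc := LinearMap.congr_fun X.counit_law x
      simp only [LinearMap.coe_comp, Function.comp_apply, LinearEquiv.coe_coe,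
        LinearMap.id_coe, id_eq] at hn hc ⊢
      rw [hn, hc]
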